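/- Completeness of LGT^∞ for the minimal Kripke fixed point: if |#φ|_{Φ_K} ≤ α (i.e., the sentence φ enters the minimal fixed point by stage α), then there exists n ∈ ω such that ⇒ φ has a cut-free LGT^∞ derivation of height ≤ α+n; dually, if |#¬φ|_{Φ_K} ≤ α, then φ ⇒ has a cut-free derivation of height ≤ α+n for some n ∈ ω. -/

import Mathlib

/-- Terms of the language of arithmetic `{0, S, +, ×}`. -/
inductive ATm : Type where
  | var : ℕ → ATm
  | zero : ATm
  | succ : ATm → ATm
  | add : ATm → ATm → ATm
  | mul : ATm → ATm → ATm

/-- Formulas of `L_ℕ ∪ {T}`. -/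
inductive AFm : Type where
  | eq : ATm → ATm → AFm
  | Tr : ATm → AFm
  | neg : AFm → AFm
  | conj : AFm → AFm → AFm
  | all : ℕ → AFm → AFm

/-- The numeral `n̄`. -/
def numeral : ℕ → ATm
  | 0 => .zero
  | n + 1 => .succ (numeral n)

def ATm.fv : ATm → Finset ℕ
  | .var n => {n}
  | .zero => ∅
  | .succ s => s.fv
  | .add s t => s.fv ∪ t.fv
  | .mul s t => s.fv ∪ t.fv

def ATm.subst (x : ℕ) (t : ATm) : ATm → ATm
  | .var n => if n = x then t else .var n
  | .zero => .zero
  | .succ s => .succ (ATm.subst x t s)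
  | .add s u => .add (ATm.subst x t s) (ATm.subst x t u)
  | .mul s u => .mul (ATm.subst x t s) (ATm.subst x t u)

def AFm.fv : AFm → Finset ℕ
  | .eq s t => s.fv ∪ t.fv
  | .Tr t => t.fv
  | .neg φ => φ.fv
  | .conj φ ψ => φ.fv ∪ ψ.fv
  | .all x φ => φ.fv.erase x

def AFm.subst (x : ℕ) (t : ATm) : AFm → AFm
  | .eq s u => .eq (ATm.subst x t s) (ATm.subst x t u)
  | .Tr s => .Tr (ATm.subst x t s)
  | .neg φ => .neg (φ.subst x t)
  | .conj φ ψ => .conj (φ.subst x t) (ψ.subst x t)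
  | .all y φ => if y = x then .all y φ else .all y (φ.subst x t)

/-- A sentence: a closed formula. -/
def AFm.Sentence (φ : AFm) : Prop := φ.fv = ∅

/-- Purely arithmetical (T-free) formulas. -/
def AFm.Arith : AFm → Prop
  | .eq _ _ => True
  | .Tr _ => False
  | .neg φ => φ.Arith
  | .conj φ ψ => φ.Arith ∧ ψ.Arith
  | .all _ φ => φ.Arith

/-- An arithmetical atom. -/
def AFm.ArithAtom (φ : AFm) : Prop := ∃ s t, φ = AFm.eq s t

/-- Gödel numbering of terms. -/
def ATm.code : ATm → ℕ
  | .var n => Nat.pair 0 n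
  | .zero => Nat.pair 1 0
  | .succ s => Nat.pair 2 s.code
  | .add s t => Nat.pair 3 (Nat.pair s.code t.code)
  | .mul s t => Nat.pair 4 (Nat.pair s.code t.code)

/-- Gödel numbering `#φ` of formulas. -/
def AFm.code : AFm → ℕ
  | .eq s t => Nat.pair 0 (Nat.pair s.code t.code)
  | .Tr t => Nat.pair 1 t.code
  | .neg φ => Nat.pair 2 φ.code
  | .conj φ ψ => Nat.pair 3 (Nat.pair φ.code ψ.code)
  | .all x φ => Nat.pair 4 (Nat.pair x φ.code)

universe u

/-- Value of a closed term in the standard model (junk value `0` on variables). -/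
def ATm.val : ATm → ℕ
  | .var _ => 0
  | .zero => 0
  | .succ s => s.val + 1
  | .add s t => s.val + t.val
  | .mul s t => s.val * t.val

/-- Closed terms. -/
def ATm.Closed (t : ATm) : Prop := t.fv = ∅

/-- Logical complexity of a formula. -/
def AFm.depth : AFm → ℕ
  | .eq _ _ => 0
  | .Tr _ => 0
  | .neg φ => φ.depth + 1
  | .all _ φ => φ.depth + 1
  | .conj φ ψ => max φ.depth ψ.depth + 1

/-- `DerivInf α m β Γ Δ`: derivations in the infinitary system `LGT^∞` of
`Γ ⇒ Δ` with ordinal height `≤ α`, cut-rank `≤ m`, and ordinal T-complexity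
`≤ β`.  The only initial sequents are true/false closed equations (no initial
sequents contain `T`); the truth rules use closed terms denoting Gödel numbers
of sentences; `∀` on the right is governed by the ω-rule. -/
inductive DerivInf : Ordinal.{0} → ℕ → Ordinal.{0} → Multiset AFm → Multiset AFm → Prop where
  | eqT {α m β} {Γ Δ : Multiset AFm} (r s : ATm) :
      r.Closed → s.Closed → r.val = s.val → DerivInf α m β Γ (.eq r s ::ₘ Δ)
  | eqF {α m β} {Γ Δ : Multiset AFm} (r s : ATm) :
      r.Closed → s.Closed → r.val ≠ s.val → DerivInf α m β (.eq r s ::ₘ Γ) Δ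
  | trL {α₀ β₀ α m β} {Γ Δ : Multiset AFm} (φ : AFm) (t : ATm) :
      DerivInf α₀ m β₀ (φ ::ₘ Γ) Δ → φ.Sentence → t.Closed → t.val = φ.code →
      α₀ < α → β₀ < β → DerivInf α m β (.Tr t ::ₘ Γ) Δ
  | trR {α₀ β₀ α m β} {Γ Δ : Multiset AFm} (φ : AFm) (t : ATm) :
      DerivInf α₀ m β₀ Γ (φ ::ₘ Δ) → φ.Sentence → t.Closed → t.val = φ.code →
      α₀ < α → β₀ < β → DerivInf α m β Γ (.Tr t ::ₘ Δ)
  | negL {α₀ β₀ α m β} {Γ Δ : Multiset AFm} (φ : AFm) :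
      DerivInf α₀ m β₀ Γ (φ ::ₘ Δ) → α₀ < α → β₀ ≤ β →
      DerivInf α m β (.neg φ ::ₘ Γ) Δ
  | negR {α₀ β₀ α m β} {Γ Δ : Multiset AFm} (φ : AFm) :
      DerivInf α₀ m β₀ (φ ::ₘ Γ) Δ → α₀ < α → β₀ ≤ β →
      DerivInf α m β Γ (.neg φ ::ₘ Δ)
  | conjL {α₀ β₀ α m β} {Γ Δ : Multiset AFm} (φ ψ : AFm) :
      DerivInf α₀ m β₀ (φ ::ₘ ψ ::ₘ Γ) Δ → α₀ < α → β₀ ≤ β →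
      DerivInf α m β (.conj φ ψ ::ₘ Γ) Δ
  | conjR {α₀ α₁ β₀ β₁ α m β} {Γ Δ : Multiset AFm} (φ ψ : AFm) :
      DerivInf α₀ m β₀ Γ (φ ::ₘ Δ) → DerivInf α₁ m β₁ Γ (ψ ::ₘ Δ) →
      α₀ < α → α₁ < α → β₀ ≤ β → β₁ ≤ β →
      DerivInf α m β Γ (.conj φ ψ ::ₘ Δ)
  | allL {α₀ β₀ α m β} {Γ Δ : Multiset AFm} (x : ℕ) (φ : AFm) (t : ATm) :
      t.Closed → DerivInf α₀ m β₀ ((φ.subst x t) ::ₘ (.all x φ) ::ₘ Γ) Δ →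
      α₀ < α → β₀ ≤ β → DerivInf α m β ((.all x φ) ::ₘ Γ) Δ
  | omega {α m β} {Γ Δ : Multiset AFm} (x : ℕ) (φ : AFm)
      (f g : ATm → Ordinal.{0}) :
      (∀ t : ATm, t.Closed → f t < α) → (∀ t : ATm, t.Closed → g t ≤ β) →
      (∀ t : ATm, t.Closed → DerivInf (f t) m (g t) Γ ((φ.subst x t) ::ₘ Δ)) →
      DerivInf α m β Γ ((.all x φ) ::ₘ Δ)
  | cut {α₀ α₁ β₀ β₁ α m β} {Γ Δ : Multiset AFm} (φ : AFm) :
      DerivInf α₀ m β₀ Γ (φ ::ₘ Δ) → DerivInf α₁ m β₁ (φ ::ₘ Γ) Δ →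
      φ.depth < m → α₀ < α → α₁ < α → β₀ ≤ β → β₁ ≤ β →
      DerivInf α m β Γ Δ

/-- The Kripke jump `Φ_K` induced by the X-positive formula `K(X,x)` expressing
the Strong-Kleene closure conditions for grounded truth, acting on sets of
Gödel numbers. -/
def PhiK (S : Set ℕ) : Set ℕ :=
  {n | ∃ φ : AFm, φ.code = n ∧ φ.Sentence ∧
    ((∃ r s : ATm, φ = .eq r s ∧ r.val = s.val) ∨
     (∃ r s : ATm, φ = .neg (.eq r s) ∧ r.val ≠ s.val) ∨
     (∃ t : ATm, φ = .Tr t ∧ t.Closed ∧ t.val ∈ S) ∨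
     (∃ (t : ATm) (ψ : AFm), φ = .neg (.Tr t) ∧ t.Closed ∧ ψ.code = t.val ∧
        (AFm.neg ψ).code ∈ S) ∨
     (∃ ψ : AFm, φ = .neg (.neg ψ) ∧ ψ.code ∈ S) ∨
     (∃ ψ χ : AFm, φ = .conj ψ χ ∧ ψ.code ∈ S ∧ χ.code ∈ S) ∨
     (∃ ψ χ : AFm, φ = .neg (.conj ψ χ) ∧
        ((AFm.neg ψ).code ∈ S ∨ (AFm.neg χ).code ∈ S)) ∨
     (∃ (x : ℕ) (ψ : AFm), φ = .all x ψ ∧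
        ∀ t : ATm, t.Closed → (ψ.subst x t).code ∈ S) ∨
     (∃ (x : ℕ) (ψ : AFm), φ = .neg (.all x ψ) ∧
        ∃ t : ATm, t.Closed ∧ (AFm.neg (ψ.subst x t)).code ∈ S))}

/-- The transfinite iteration `Φ_K^α := Φ_K(⋃_{β<α} Φ_K^β)`. -/
noncomputable def PhiIter : Ordinal.{0} → Set ℕ
  | α => PhiK {n | ∃ β, ∃ _ : β < α, n ∈ PhiIter β}
termination_by α => α
decreasing_by assumption

/-- The minimal fixed point `I_{Φ_K}` of the Kripke jump. -/
def Ilfp : Set ℕ := {n | ∃ α : Ordinal.{0}, n ∈ PhiIter α}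

/-!
Induction on the stage `α`. A sentence entering `Φ_K` at stage `α` does so by a single Kripke
clause from codes that entered at earlier stages, and each clause is mirrored by at most two
inference steps (one right rule, preceded for a negated compound by the matching left rule). So
stage `α = ω·q + k` is derivable at height `ω·q + 2k + 2`, uniformly in the sentence; uniformity is
what lets the ω-rule collect the premises of a universal sentence, whose instances may enter at
unboundedly many finite stages below `α`.
-/

open Ordinal Order

theorem ATm.code_injective : Function.Injective ATm.code := by
  intro s t h
  induction s generalizing t <;> cases t <;> grind [ATm.code, Nat.pair_eq_pair]

theorem AFm.code_injective : Function.Injective AFm.code := by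
  intro φ ψ h
  induction φ generalizing ψ <;> cases ψ <;>
    grind [AFm.code, Nat.pair_eq_pair, ATm.code_injective.eq_iff]

theorem AFm.Sentence.closed_of_eq {r s : ATm} (h : (AFm.eq r s).Sentence) :
    r.Closed ∧ s.Closed := by
  simpa [AFm.Sentence, AFm.fv, ATm.Closed, Finset.union_eq_empty] using h

noncomputable def stageHeight (α : Ordinal) : Ordinal := α + α % ω

theorem stageHeight_eq (α : Ordinal) {k : ℕ} (hk : α % ω = k) :
    stageHeight α = ω * (α / ω) + ↑(2 * k) := by
  rw [stageHeight, hk, two_mul, Nat.cast_add, ← add_assoc]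
  conv_lhs => rw [← div_add_mod α ω, hk]

theorem stageHeight_add_two_le {γ α : Ordinal} (h : γ < α) :
    stageHeight γ + 2 ≤ stageHeight α := by
  obtain ⟨k, hk⟩ := lt_omega0.1 (mod_lt γ omega0_ne_zero)
  obtain ⟨l, hl⟩ := lt_omega0.1 (mod_lt α omega0_ne_zero)
  have hγ : stageHeight γ + 2 = ω * (γ / ω) + ↑(2 * k + 2) := by
    rw [stageHeight_eq γ hk, add_assoc, Nat.cast_add]; rfl
  rw [hγ, stageHeight_eq α hl]
  rcases (div_le_left h.le ω).lt_or_eq with hq | hq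
  · calc ω * (γ / ω) + ↑(2 * k + 2) ≤ ω * (γ / ω) + ω := by
          gcongr; exact (natCast_lt_omega0 _).le
      _ = ω * succ (γ / ω) := (mul_succ _ _).symm
      _ ≤ ω * (α / ω) := by gcongr; exact succ_le_of_lt hq
      _ ≤ ω * (α / ω) + ↑(2 * l) := le_self_add
  · have hkl : k < l := by
      have h' := h
      rw [← div_add_mod γ ω, ← div_add_mod α ω, hq, hk, hl] at h'
      exact_mod_cast (add_lt_add_iff_left _).1 h'
    rw [hq]
    gcongr
    omega

namespace DerivInf

variable {α α' β β' : Ordinal} {m : ℕ} {Γ Δ : Multiset AFm}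

theorem mono (h : DerivInf α m β Γ Δ) (hα : α ≤ α') (hβ : β ≤ β') :
    DerivInf α' m β' Γ Δ := by
  cases h with
  | eqT r s hr hs hv => exact .eqT r s hr hs hv
  | eqF r s hr hs hv => exact .eqF r s hr hs hv
  | trL φ t d hφ ht hv h₁ h₂ => exact .trL φ t d hφ ht hv (h₁.trans_le hα) (h₂.trans_le hβ)
  | trR φ t d hφ ht hv h₁ h₂ => exact .trR φ t d hφ ht hv (h₁.trans_le hα) (h₂.trans_le hβ)
  | negL φ d h₁ h₂ => exact .negL φ d (h₁.trans_le hα) (h₂.trans hβ)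
  | negR φ d h₁ h₂ => exact .negR φ d (h₁.trans_le hα) (h₂.trans hβ)
  | conjL φ ψ d h₁ h₂ => exact .conjL φ ψ d (h₁.trans_le hα) (h₂.trans hβ)
  | conjR φ ψ d e h₁ h₂ h₃ h₄ =>
      exact .conjR φ ψ d e (h₁.trans_le hα) (h₂.trans_le hα) (h₃.trans hβ) (h₄.trans hβ)
  | allL x φ t ht d h₁ h₂ => exact .allL x φ t ht d (h₁.trans_le hα) (h₂.trans hβ)
  | omega x φ f g hf hg d =>
      exact .omega x φ f g (fun t ht => (hf t ht).trans_le hα) (fun t ht => (hg t ht).trans hβ) d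
  | cut φ d e hφ h₁ h₂ h₃ h₄ =>
      exact .cut φ d e hφ (h₁.trans_le hα) (h₂.trans_le hα) (h₃.trans hβ) (h₄.trans hβ)

theorem weakenLeft (h : DerivInf α m β Γ Δ) (χ : AFm) : DerivInf α m β (χ ::ₘ Γ) Δ := by
  induction h with
  | eqT r s hr hs hv => exact .eqT r s hr hs hv
  | eqF r s hr hs hv => rw [Multiset.cons_swap]; exact .eqF r s hr hs hv
  | trL φ t _ hφ ht hv h₁ h₂ ih =>
      rw [Multiset.cons_swap]
      exact .trL φ t (by rwa [Multiset.cons_swap] at ih) hφ ht hv h₁ h₂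
  | trR φ t _ hφ ht hv h₁ h₂ ih => exact .trR φ t ih hφ ht hv h₁ h₂
  | negL φ _ h₁ h₂ ih => rw [Multiset.cons_swap]; exact .negL φ ih h₁ h₂
  | negR φ _ h₁ h₂ ih => exact .negR φ (by rwa [Multiset.cons_swap] at ih) h₁ h₂
  | conjL φ ψ _ h₁ h₂ ih =>
      rw [Multiset.cons_swap]
      exact .conjL φ ψ (by rwa [Multiset.cons_swap χ φ, Multiset.cons_swap χ ψ] at ih) h₁ h₂
  | conjR φ ψ _ _ h₁ h₂ h₃ h₄ ih₁ ih₂ => exact .conjR φ ψ ih₁ ih₂ h₁ h₂ h₃ h₄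
  | allL x φ t ht _ h₁ h₂ ih =>
      rw [Multiset.cons_swap]
      exact .allL x φ t ht (by rwa [Multiset.cons_swap χ, Multiset.cons_swap χ] at ih) h₁ h₂
  | omega x φ f g hf hg _ ih => exact .omega x φ f g hf hg ih
  | cut φ _ _ hφ h₁ h₂ h₃ h₄ ih₁ ih₂ =>
      exact .cut φ ih₁ (by rwa [Multiset.cons_swap] at ih₂) hφ h₁ h₂ h₃ h₄

theorem weakenLeft_singleton (h : DerivInf α m β {φ} Δ) (χ : AFm) :
    DerivInf α m β (φ ::ₘ χ ::ₘ 0) Δ := by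
  simpa only [← Multiset.cons_zero, Multiset.cons_swap χ] using h.weakenLeft χ

end DerivInf

structure WitnessedAt (S : Set ℕ) (c : Ordinal) : Prop where
  sentence : ∀ n ∈ S, ∃ ψ : AFm, ψ.code = n ∧ ψ.Sentence
  proves : ∀ ψ : AFm, ψ.code ∈ S → DerivInf c 0 c 0 {ψ}
  refutes : ∀ ψ : AFm, (AFm.neg ψ).code ∈ S → DerivInf c 0 c {ψ} 0

namespace WitnessedAt

variable {S : Set ℕ} {c : Ordinal}

theorem mono (hW : WitnessedAt S c) {c' : Ordinal} (hc : c ≤ c') : WitnessedAt S c' where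
  sentence := hW.sentence
  proves ψ h := (hW.proves ψ h).mono hc hc
  refutes ψ h := (hW.refutes ψ h).mono hc hc

theorem sentence_of_code_mem (hW : WitnessedAt S c) {ψ : AFm} (h : ψ.code ∈ S) :
    ψ.Sentence := by
  obtain ⟨χ, hχ, hs⟩ := hW.sentence _ h
  rwa [← AFm.code_injective hχ]

theorem refutes_of_neg_mem_phiK (hW : WitnessedAt S c) {φ : AFm}
    (h : (AFm.neg φ).code ∈ PhiK S) : DerivInf (c + 1) 0 (c + 1) {φ} 0 := by
  obtain ⟨φ', hc, hsent, hcase⟩ := h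
  obtain rfl := AFm.code_injective hc
  have hlt : c < c + 1 := lt_add_one c
  rcases hcase with ⟨r, s, ⟨⟩, -⟩ | ⟨r, s, ⟨⟩, hv⟩ | ⟨t, ⟨⟩, -⟩ | ⟨t, ψ, ⟨⟩, ht, hψ, hmem⟩ |
    ⟨ψ, ⟨⟩, hmem⟩ | ⟨ψ, χ, ⟨⟩, -⟩ | ⟨ψ, χ, ⟨⟩, hmem | hmem⟩ | ⟨x, ψ, ⟨⟩, -⟩ |
    ⟨x, ψ, ⟨⟩, t, ht, hmem⟩
  · obtain ⟨hr, hs⟩ := AFm.Sentence.closed_of_eq hsent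
    exact .eqF r s hr hs hv
  · exact .trL ψ t (hW.refutes ψ hmem) (hW.sentence_of_code_mem (ψ := .neg ψ) hmem) ht hψ.symm
      hlt hlt
  · exact .negL ψ (hW.proves ψ hmem) hlt hlt.le
  · exact .conjL ψ χ ((hW.refutes ψ hmem).weakenLeft_singleton χ) hlt hlt.le
  · exact .conjL ψ χ ((hW.refutes χ hmem).weakenLeft ψ) hlt hlt.le
  · exact .allL x ψ t ht ((hW.refutes _ hmem).weakenLeft_singleton _) hlt hlt.le

theorem proves_of_mem_phiK (hW : WitnessedAt S c) {φ : AFm} (h : φ.code ∈ PhiK S) :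
    DerivInf (c + 2) 0 (c + 2) 0 {φ} := by
  have hlt : c < c + 2 := lt_add_of_pos_right c two_pos
  have of_neg : ∀ ψ, φ = .neg ψ → DerivInf (c + 2) 0 (c + 2) 0 {φ} := by
    rintro ψ rfl
    have h₁ : c + 1 < c + 2 := add_lt_add_right one_lt_two c
    exact .negR ψ (hW.refutes_of_neg_mem_phiK h) h₁ h₁.le
  obtain ⟨φ', hc, hsent, hcase⟩ := h
  obtain rfl := AFm.code_injective hc
  rcases hcase with ⟨r, s, rfl, hv⟩ | ⟨r, s, hφ, -⟩ | ⟨t, rfl, ht, hmem⟩ | ⟨t, ψ, hφ, -⟩ |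
    ⟨ψ, hφ, -⟩ | ⟨ψ, χ, rfl, h₁, h₂⟩ | ⟨ψ, χ, hφ, -⟩ | ⟨x, ψ, rfl, hall⟩ | ⟨x, ψ, hφ, -⟩
  · obtain ⟨hr, hs⟩ := AFm.Sentence.closed_of_eq hsent
    exact .eqT r s hr hs hv
  · exact of_neg _ hφ
  · obtain ⟨ψ, hψ, hψs⟩ := hW.sentence _ hmem
    exact .trR ψ t (hW.proves ψ (hψ ▸ hmem)) hψs ht hψ.symm hlt hlt
  · exact of_neg _ hφ
  · exact of_neg _ hφ
  · exact .conjR ψ χ (hW.proves ψ h₁) (hW.proves χ h₂) hlt hlt hlt.le hlt.le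
  · exact of_neg _ hφ
  · exact .omega x ψ (fun _ => c) (fun _ => c) (fun _ _ => hlt) (fun _ _ => hlt.le)
      fun t ht => hW.proves _ (hall t ht)
  · exact of_neg _ hφ

theorem phiK (hW : WitnessedAt S c) : WitnessedAt (PhiK S) (c + 2) where
  sentence _ := fun ⟨φ, hφ, hs, _⟩ => ⟨φ, hφ, hs⟩
  proves _ h := hW.proves_of_mem_phiK h
  refutes _ h :=
    have h₁ : c + 1 ≤ c + 2 := add_le_add_right one_le_two c
    (hW.refutes_of_neg_mem_phiK h).mono h₁ h₁

end WitnessedAt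

theorem witnessedAt_phiIter (α : Ordinal) : WitnessedAt (PhiIter α) (stageHeight α + 2) := by
  induction α using WellFoundedLT.induction with
  | _ α IH =>
  have hbelow : WitnessedAt {n | ∃ γ, ∃ _ : γ < α, n ∈ PhiIter γ} (stageHeight α) :=
    { sentence := fun n ⟨γ, hγ, hn⟩ => (IH γ hγ).sentence n hn
      proves := fun ψ ⟨γ, hγ, hψ⟩ => ((IH γ hγ).mono (stageHeight_add_two_le hγ)).proves ψ hψ
      refutes := fun ψ ⟨γ, hγ, hψ⟩ =>
        ((IH γ hγ).mono (stageHeight_add_two_le hγ)).refutes ψ hψ }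
  rw [PhiIter]
  exact hbelow.phiK

theorem lgtInf_completeness_general (φ : AFm) (α : Ordinal) :
    (φ.code ∈ PhiIter α →
      ∃ n : ℕ, ∃ β ≤ α + (n : Ordinal), DerivInf (α + (n : Ordinal)) 0 β 0 {φ}) ∧
    ((AFm.neg φ).code ∈ PhiIter α →
      ∃ n : ℕ, ∃ β ≤ α + (n : Ordinal), DerivInf (α + (n : Ordinal)) 0 β {φ} 0) := by
  obtain ⟨k, hk⟩ := lt_omega0.1 (mod_lt α omega0_ne_zero)
  have hheight : stageHeight α + 2 = α + ↑(k + 2) := by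
    rw [stageHeight, hk, add_assoc, Nat.cast_add]; rfl
  have hW := hheight ▸ witnessedAt_phiIter α
  exact ⟨fun h => ⟨k + 2, _, le_rfl, hW.proves φ h⟩, fun h => ⟨k + 2, _, le_rfl, hW.refutes φ h⟩⟩

/-- completeness of `LGT^∞` for the minimal Kripke fixed point:
if `#φ` enters the minimal fixed point by stage `α`, then `⇒ φ` has a cut-free
derivation of height `≤ α + n` for some `n ∈ ω`; dually for `#¬φ` and `φ ⇒`. -/
theorem lgtInf_completeness (φ : AFm) (hS : φ.Sentence) (α : Ordinal) :
    (φ.code ∈ PhiIter α →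
      ∃ n : ℕ, ∃ β ≤ α + (n : Ordinal), DerivInf (α + (n : Ordinal)) 0 β 0 {φ}) ∧
    ((AFm.neg φ).code ∈ PhiIter α →
      ∃ n : ℕ, ∃ β ≤ α + (n : Ordinal), DerivInf (α + (n : Ordinal)) 0 β {φ} 0) :=
  lgtInf_completeness_general φ α
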